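/- arXiv:2407.02949 — 3 statements merged into one kernel-verified Lean document; each statement's English description precedes it below -/
import Mathlib

section
/- For all real t ∈ [1,2] and p ∈ [0, 2/3], the quantity (9p + 4t − 6pt − 3)/t is at most the maximum of (9p + 2t − 3pt)/2 and (2t − 3pt + 6)/(t + 2). -/
/-- For t ∈ [1,2] and p ∈ [0,2/3], the Case-2 bound is dominated by the max of the
Case-1 and Case-3 bounds. -/
theorem stmt_3 (t p : ℝ) (ht : 1 ≤ t) (ht2 : t ≤ 2) (hp : 0 ≤ p) (hp2 : p ≤ 2/3) :
    (9*p + 4*t - 6*p*t - 3) / t ≤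
      max ((9*p + 2*t - 3*p*t) / 2) ((2*t - 3*p*t + 6) / (t + 2)) := by
  have ht0 : (0:ℝ) < t := by linarith
  have ht20 : (0:ℝ) < t + 2 := by linarith
  rcases le_or_gt (2*t^2 - 3*p*t^2 - 3*p*t + 18*p - t - 6) 0 with h | h
  · refine le_max_of_le_right ?_
    rw [div_le_div_iff₀ ht0 ht20]
    nlinarith
  · refine le_max_of_le_left ?_
    rw [div_le_div_iff₀ ht0 (by norm_num : (0:ℝ) < 2)]
    nlinarith [mul_nonneg h.le (by linarith : (0:ℝ) ≤ 2 - t), mul_nonneg h.le (by linarith : (0:ℝ) ≤ t - 1), sq_nonneg (t-1), sq_nonneg (t-2), mul_nonneg hp (sq_nonneg (t-1)), mul_nonneg hp (sq_nonneg (t-2)), mul_nonneg (by linarith : (0:ℝ) ≤ 2/3 - p) (sq_nonneg (t-1)), mul_nonneg (by linarith : (0:ℝ) ≤ 2/3 - p) (sq_nonneg (t-2))]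
end

section
/- The value min over t ∈ [1,2] and p ∈ [0,2/3] of max{(9p + 2t − 3pt)/2, (2t − 3pt + 6)/(t+2)} equals 24/11, attained at t = 3/2 and p = 10/33. -/
/-- The min over t ∈ [1,2], p ∈ [0,2/3] of max{(9p+2t−3pt)/2, (2t−3pt+6)/(t+2)}
equals 24/11, attained at t = 3/2, p = 10/33. -/
theorem stmt_4 :
    IsLeast {v : ℝ | ∃ t p : ℝ, 1 ≤ t ∧ t ≤ 2 ∧ 0 ≤ p ∧ p ≤ 2/3 ∧
      v = max ((9*p + 2*t - 3*p*t) / 2) ((2*t - 3*p*t + 6) / (t + 2))} (24/11) ∧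
    max ((9*(10/33:ℝ) + 2*(3/2) - 3*(10/33)*(3/2)) / 2)
        ((2*(3/2:ℝ) - 3*(10/33)*(3/2) + 6) / ((3/2) + 2)) = 24/11 := by
  have hval : max ((9*(10/33:ℝ) + 2*(3/2) - 3*(10/33)*(3/2)) / 2)
        ((2*(3/2:ℝ) - 3*(10/33)*(3/2) + 6) / ((3/2) + 2)) = 24/11 := by
    norm_num
  refine ⟨⟨⟨3/2, 10/33, by norm_num, by norm_num, by norm_num, by norm_num, hval.symm⟩, ?_⟩, hval⟩
  rintro v ⟨t, p, ht1, ht2, hp0, hp2, rfl⟩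
  by_contra h
  push_neg at h
  rw [max_lt_iff] at h
  obtain ⟨hA, hB⟩ := h
  have ht2' : (0:ℝ) < t + 2 := by linarith
  have hA' : 9*p + 2*t - 3*p*t < 48/11 := by linarith [(div_lt_iff₀ (by norm_num : (0:ℝ) < 2)).mp hA]
  have hB' : 2*t - 3*p*t + 6 < 24/11 * (t + 2) := (div_lt_iff₀ ht2').mp hB
  nlinarith [sq_nonneg (2*t - 3), mul_pos ht2' ht2', sq_nonneg (t - 3/2), mul_nonneg hp0 (sub_nonneg.mpr ht1)]
end

section
/- For every real p₂ and p₁ with 0 ≤ p₂ ≤ 1 and 0 ≤ p₁ ≤ 1, min{1/(7/4 + 3p₁ − (9/4)(1−p₂)), 1/(1 + 2p₁/p₂)} ≤ 1/(1 + 3p₁), provided p₂ > 0 and 7/4 + 3p₁ − (9/4)(1−p₂) > 0. -/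
/-- Case B of the upper-bound proof: the min of the two tail bounds is at most 1/(1+3p₁). -/
theorem stmt_6 (p₁ p₂ : ℝ) (hp1 : 0 ≤ p₁) (hp1' : p₁ ≤ 1) (hp2 : 0 ≤ p₂) (hp2' : p₂ ≤ 1)
    (hpos : 0 < p₂) (hden : 0 < 7/4 + 3*p₁ - (9/4)*(1 - p₂)) :
    min (1 / (7/4 + 3*p₁ - (9/4)*(1 - p₂))) (1 / (1 + 2*p₁/p₂)) ≤ 1 / (1 + 3*p₁) := by
  have h3 : 0 < 1 + 3*p₁ := by linarith
  rcases le_or_gt (2/3) p₂ with h | h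
  · refine le_trans (min_le_left _ _) ?_
    apply one_div_le_one_div_of_le h3
    linarith
  · refine le_trans (min_le_right _ _) ?_
    apply one_div_le_one_div_of_le h3
    have : 3*p₁ ≤ 2*p₁/p₂ := by
      rw [le_div_iff₀ hpos]; nlinarith
    linarith
end
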